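/- Let (Λ, 𝓐, μ) be a finite measure space, d ≥ 1 and T > 0. Let f : Λ × ℝ^d → (0, ∞) be a measurable probability density with respect to μ ⊗ Lebesgue, i.e. ∫_Λ ∫_{ℝ^d} f(x,v) dv dμ(x) = 1, set ρ_f(x) = ∫_{ℝ^d} f(x,v) dv, and assume the energy constraint ∫_Λ ∫_{ℝ^d} |v|² f(x,v) dv dμ(x) = dT. Assume that f log f, ρ_f(x) m_T(v) log f(x,v) and |v|² f are integrable. Then ∫_Λ ∫_{ℝ^d} log f(x,v) · ( m_T(v) ρ_f(x) − f(x,v) ) dv dμ(x) ≤ 0, with equality if and only if f(x,v) = ρ_f(x) m_T(v) for almost every (x,v). -/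

import Mathlib

/-!
Write `g = ρ_f m_T` and `Ψ = (g - f) (log g - log f) ≥ 0`. Since
`log g = log ρ_f(x) - (d/2) log (2πT) - |v|² / (2T)` and, for each `x`, the defect
`g(x, ·) - f(x, ·)` has zero mass, integrating `Ψ` first in `v` kills the first two terms; the
`|v|²` term integrates to zero by the energy balance, the second moment of `m_T` being `dT`.
Hence `∫ Ψ` is minus the dissipation, which is therefore `≤ 0`, with equality iff `Ψ = 0` a.e.,
i.e. `f = g` a.e. Integrating fibrewise first means `ρ_f log ρ_f` never has to be integrable:
`Ψ` is integrable because of its sign.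
-/

open MeasureTheory

/-- The centered Maxwellian (Gaussian) probability density at temperature `T` on `ℝᵈ`. -/
noncomputable def maxwellian (d : ℕ) (T : ℝ) (v : EuclideanSpace ℝ (Fin d)) : ℝ :=
  (2 * Real.pi * T) ^ (-(d : ℝ) / 2) * Real.exp (-‖v‖ ^ 2 / (2 * T))

open ProbabilityTheory Real Finset
open scoped NNReal

lemma integral_sq_mul_gaussianPDFReal {v : ℝ≥0} (hv : v ≠ 0) :
    ∫ t, t ^ 2 * gaussianPDFReal 0 v t = v := by
  have h := integral_gaussianReal_eq_integral_smul (μ := 0) (f := fun t : ℝ => t ^ 2) hv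
  simp only [smul_eq_mul, mul_comm (gaussianPDFReal _ _ _)] at h
  rw [← h, ← variance_of_integral_eq_zero aemeasurable_id' (by simp), variance_fun_id_gaussianReal]

lemma integrable_sq_mul_gaussianPDFReal {v : ℝ≥0} (hv : v ≠ 0) :
    Integrable fun t => t ^ 2 * gaussianPDFReal 0 v t := by
  have h := (memLp_id_gaussianReal (μ := 0) (v := v) 2).integrable_sq
  rw [gaussianReal_of_var_ne_zero _ hv, integrable_withDensity_iff_integrable_smul'
    (measurable_gaussianPDF _ _) (ae_of_all _ fun _ => gaussianPDF_lt_top)] at h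
  simpa [toReal_gaussianPDF, mul_comm] using h

section ProductDensity

variable {ι : Type*} [Fintype ι] {p : ℝ → ℝ}

lemma integral_pi_prod_eq_one (hp1 : ∫ t, p t = 1) : ∫ x : ι → ℝ, ∏ j, p (x j) = 1 := by
  rw [volume_pi, integral_fintype_prod_eq_prod]; simp [hp1]

variable [DecidableEq ι]

lemma sq_mul_prod_eq_prod_ite (x : ι → ℝ) (i : ι) :
    x i ^ 2 * ∏ j, p (x j) = ∏ j, (if j = i then fun t => t ^ 2 * p t else p) (x j) := by
  calc x i ^ 2 * ∏ j, p (x j) = ∏ j, (if j = i then x j ^ 2 else 1) * p (x j) := by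
        rw [prod_mul_distrib, prod_ite_eq' univ i]; simp
    _ = _ := prod_congr rfl fun j _ => by split_ifs <;> simp

lemma integrable_pi_sq_mul_prod (hp : Integrable p) (hp2 : Integrable fun t => t ^ 2 * p t)
    (i : ι) : Integrable fun x : ι → ℝ => x i ^ 2 * ∏ j, p (x j) := by
  simp_rw [sq_mul_prod_eq_prod_ite _ i]
  exact Integrable.fintype_prod fun j => by split_ifs <;> assumption

lemma integral_pi_sq_mul_prod (hp1 : ∫ t, p t = 1) (i : ι) :
    ∫ x : ι → ℝ, x i ^ 2 * ∏ j, p (x j) = ∫ t, t ^ 2 * p t := by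
  simp_rw [sq_mul_prod_eq_prod_ite _ i]
  rw [volume_pi, integral_fintype_prod_eq_prod,
    prod_congr rfl fun j _ => apply_ite (fun g : ℝ → ℝ => ∫ t, g t) (j = i) _ _]
  simp [hp1]

end ProductDensity

section Maxwellian

variable {d : ℕ} {T : ℝ}

lemma maxwellian_eq_prod (hT : 0 < T) (v : EuclideanSpace ℝ (Fin d)) :
    maxwellian d T v = ∏ i, gaussianPDFReal 0 T.toNNReal (v i) := by
  have h2πT : 0 < 2 * π * T := by positivity
  simp only [maxwellian, gaussianPDFReal, Real.coe_toNNReal _ hT.le, sub_zero,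
    prod_mul_distrib, prod_const, card_univ, Fintype.card_fin,
    ← Real.exp_sum, EuclideanSpace.real_norm_sq_eq, ← sum_div, ← sum_neg_distrib]
  congr 1
  rw [Real.sqrt_eq_rpow, ← Real.rpow_neg h2πT.le, ← Real.rpow_mul_natCast h2πT.le]
  ring_nf

lemma maxwellian_pos (hT : 0 < T) (v : EuclideanSpace ℝ (Fin d)) : 0 < maxwellian d T v := by
  unfold maxwellian; positivity

lemma log_maxwellian (hT : 0 < T) (v : EuclideanSpace ℝ (Fin d)) :
    Real.log (maxwellian d T v) = -(d / 2) * Real.log (2 * π * T) - ‖v‖ ^ 2 / (2 * T) := by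
  unfold maxwellian
  rw [Real.log_mul (by positivity) (Real.exp_ne_zero _), Real.log_exp,
    Real.log_rpow (by positivity)]
  ring

lemma integrable_maxwellian (hT : 0 < T) : Integrable (maxwellian d T) := by
  simp_rw [← (PiLp.volume_preserving_toLp (Fin d)).integrable_comp_emb
    (MeasurableEquiv.toLp 2 _).measurableEmbedding, Function.comp_def, maxwellian_eq_prod hT]
  exact Integrable.fintype_prod fun _ => integrable_gaussianPDFReal 0 _

lemma integral_maxwellian (hT : 0 < T) : ∫ v, maxwellian d T v = 1 := by
  rw [← (PiLp.volume_preserving_toLp (Fin d)).integral_comp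
    (MeasurableEquiv.toLp 2 _).measurableEmbedding]
  simp_rw [maxwellian_eq_prod hT]
  exact integral_pi_prod_eq_one (integral_gaussianPDFReal_eq_one 0 (by simpa using hT))

lemma integrable_sq_norm_mul_maxwellian (hT : 0 < T) :
    Integrable fun v : EuclideanSpace ℝ (Fin d) => ‖v‖ ^ 2 * maxwellian d T v := by
  simp_rw [← (PiLp.volume_preserving_toLp (Fin d)).integrable_comp_emb
    (MeasurableEquiv.toLp 2 _).measurableEmbedding, Function.comp_def, maxwellian_eq_prod hT,
    EuclideanSpace.real_norm_sq_eq, sum_mul]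
  refine integrable_finsetSum _ fun i _ => ?_
  simpa using integrable_pi_sq_mul_prod (integrable_gaussianPDFReal 0 _)
    (integrable_sq_mul_gaussianPDFReal (by simpa using hT)) i

lemma integral_sq_norm_mul_maxwellian (hT : 0 < T) :
    ∫ v : EuclideanSpace ℝ (Fin d), ‖v‖ ^ 2 * maxwellian d T v = d * T := by
  have hT' : T.toNNReal ≠ 0 := by simpa using hT
  rw [← (PiLp.volume_preserving_toLp (Fin d)).integral_comp
    (MeasurableEquiv.toLp 2 _).measurableEmbedding]
  simp_rw [maxwellian_eq_prod hT, EuclideanSpace.real_norm_sq_eq, sum_mul]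
  have hint (i : Fin d) := integrable_pi_sq_mul_prod (integrable_gaussianPDFReal 0 _)
    (integrable_sq_mul_gaussianPDFReal hT') i
  rw [integral_finsetSum _ fun i _ => by simpa using hint i]
  simp [integral_pi_sq_mul_prod (integral_gaussianPDFReal_eq_one 0 hT'),
    integral_sq_mul_gaussianPDFReal hT', hT.le]

end Maxwellian

lemma sub_mul_log_sub_nonneg {a b : ℝ} (ha : 0 < a) (hb : 0 < b) :
    0 ≤ (a - b) * (Real.log a - Real.log b) := by
  rcases le_total a b with h | h
  · exact mul_nonneg_of_nonpos_of_nonpos (sub_nonpos.2 h) (sub_nonpos.2 (Real.log_le_log ha h))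
  · exact mul_nonneg (sub_nonneg.2 h) (sub_nonneg.2 (Real.log_le_log hb h))

lemma sub_mul_log_sub_eq_zero_iff {a b : ℝ} (ha : 0 < a) (hb : 0 < b) :
    (a - b) * (Real.log a - Real.log b) = 0 ↔ a = b := by
  rw [mul_eq_zero, sub_eq_zero, sub_eq_zero, Real.log_injOn_pos.eq_iff ha hb, or_self]

lemma integral_pos_of_forall_pos {α : Type*} [MeasurableSpace α] {μ : Measure α} [NeZero μ]
    {f : α → ℝ} (hf : Integrable f μ) (hpos : ∀ x, 0 < f x) : 0 < ∫ x, f x ∂μ := by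
  rw [integral_pos_iff_support_of_nonneg (fun x => (hpos x).le) hf]
  simp [Function.support, (hpos _).ne', NeZero.ne μ]

section Fubini

variable {α β : Type*} [MeasurableSpace α] [MeasurableSpace β] {μ : Measure α} {ν : Measure β}
  [SFinite μ] [SFinite ν]

lemma integrable_prod_and_integral_eq_of_nonneg {F G : α × β → ℝ}
    (hF : AEStronglyMeasurable F (μ.prod ν)) (hF0 : 0 ≤ᵐ[μ.prod ν] F)
    (hG : Integrable G (μ.prod ν))
    (hfib : ∀ᵐ x ∂μ, Integrable (fun y => F (x, y)) ν ∧
      ∫ y, F (x, y) ∂ν = ∫ y, G (x, y) ∂ν) :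
    Integrable F (μ.prod ν) ∧ ∫ p, F p ∂(μ.prod ν) = ∫ p, G p ∂(μ.prod ν) := by
  have hFint : Integrable F (μ.prod ν) := by
    refine (integrable_prod_iff hF).2 ⟨hfib.mono fun x hx => hx.1, hG.integral_prod_left.congr ?_⟩
    filter_upwards [hfib, Measure.ae_ae_of_ae_prod hF0] with x hx hx0
    rw [← hx.2]
    exact integral_congr_ae (hx0.mono fun y hy => (Real.norm_of_nonneg hy).symm)
  refine ⟨hFint, ?_⟩
  rw [integral_prod _ hFint, integral_prod _ hG]
  exact integral_congr_ae (hfib.mono fun x hx => hx.2)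

end Fubini

section Thermostat

variable {Λ : Type*} [MeasurableSpace Λ] {μ : Measure Λ} [SFinite μ]
  {d : ℕ} {T : ℝ} {f : Λ × EuclideanSpace ℝ (Fin d) → ℝ} {ρf : Λ → ℝ}

lemma integral_sub_mul_log_sub_maxwellian (hT : 0 < T) {h : EuclideanSpace ℝ (Fin d) → ℝ}
    {r : ℝ} (hpos : ∀ v, 0 < h v) (hh : Integrable h) (hr : ∫ v, h v = r)
    (hG : Integrable fun v => (‖v‖ ^ 2 * h v - ‖v‖ ^ 2 * (r * maxwellian d T v)) / (2 * T)
      - Real.log (h v) * (maxwellian d T v * r - h v)) :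
    Integrable (fun v => (r * maxwellian d T v - h v) *
        (Real.log (r * maxwellian d T v) - Real.log (h v))) ∧
      ∫ v, (r * maxwellian d T v - h v) * (Real.log (r * maxwellian d T v) - Real.log (h v)) =
        ∫ v, ((‖v‖ ^ 2 * h v - ‖v‖ ^ 2 * (r * maxwellian d T v)) / (2 * T)
          - Real.log (h v) * (maxwellian d T v * r - h v)) := by
  have hr0 : 0 < r := hr ▸ integral_pos_of_forall_pos hh hpos
  have hdefect : Integrable fun v => r * maxwellian d T v - h v :=
    ((integrable_maxwellian hT).const_mul r).sub hh
  have hmass : ∫ v, (r * maxwellian d T v - h v) = 0 := by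
    rw [integral_sub ((integrable_maxwellian hT).const_mul r) hh, integral_const_mul,
      integral_maxwellian hT, hr, mul_one, sub_self]
  have hsplit : (fun v => (r * maxwellian d T v - h v) *
      (Real.log (r * maxwellian d T v) - Real.log (h v))) = fun v =>
      (Real.log r - d / 2 * Real.log (2 * π * T)) * (r * maxwellian d T v - h v) +
        ((‖v‖ ^ 2 * h v - ‖v‖ ^ 2 * (r * maxwellian d T v)) / (2 * T)
          - Real.log (h v) * (maxwellian d T v * r - h v)) := by
    ext v
    rw [Real.log_mul hr0.ne' (maxwellian_pos hT v).ne', log_maxwellian hT]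
    field_simp
    ring
  rw [hsplit, integral_add (hdefect.const_mul _) hG, integral_const_mul, hmass, mul_zero, zero_add]
  exact ⟨(hdefect.const_mul _).add hG, rfl⟩

lemma ae_pos_mul_maxwellian (hT : 0 < T) (hfpos : ∀ p, 0 < f p)
    (hρf : ∀ x, ρf x = ∫ v, f (x, v)) (hf : Integrable f (μ.prod volume)) :
    ∀ᵐ p ∂(μ.prod volume), 0 < ρf p.1 * maxwellian d T p.2 := by
  have hρpos : ∀ᵐ x ∂μ, 0 < ρf x := by
    filter_upwards [hf.prod_right_ae] with x hx
    exact hρf x ▸ integral_pos_of_forall_pos hx fun v => hfpos (x, v)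
  filter_upwards [Measure.quasiMeasurePreserving_fst.ae hρpos] with p hp
  exact mul_pos hp (maxwellian_pos hT p.2)

lemma integrable_and_integral_energy_sub_dissipation (hT : 0 < T)
    (hρint : Integrable ρf μ) (hρone : ∫ x, ρf x ∂μ = 1)
    (henergy : ∫ p, ‖p.2‖ ^ 2 * f p ∂(μ.prod volume) = (d : ℝ) * T)
    (hint1 : Integrable (fun p => f p * Real.log (f p)) (μ.prod volume))
    (hint2 : Integrable (fun p => ρf p.1 * maxwellian d T p.2 * Real.log (f p))
      (μ.prod volume))
    (hint3 : Integrable (fun p => ‖p.2‖ ^ 2 * f p) (μ.prod volume)) :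
    Integrable (fun p => (‖p.2‖ ^ 2 * f p - ‖p.2‖ ^ 2 * (ρf p.1 * maxwellian d T p.2)) / (2 * T)
      - Real.log (f p) * (maxwellian d T p.2 * ρf p.1 - f p)) (μ.prod volume) ∧
    ∫ p, ((‖p.2‖ ^ 2 * f p - ‖p.2‖ ^ 2 * (ρf p.1 * maxwellian d T p.2)) / (2 * T)
      - Real.log (f p) * (maxwellian d T p.2 * ρf p.1 - f p)) ∂(μ.prod volume) =
      -∫ p, Real.log (f p) * (maxwellian d T p.2 * ρf p.1 - f p) ∂(μ.prod volume) := by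
  have hg2 : Integrable (fun p => ‖p.2‖ ^ 2 * (ρf p.1 * maxwellian d T p.2)) (μ.prod volume) :=
    (hρint.mul_prod (integrable_sq_norm_mul_maxwellian hT)).congr
      (ae_of_all _ fun p => by ring)
  have hg2_eq : ∫ p, ‖p.2‖ ^ 2 * (ρf p.1 * maxwellian d T p.2) ∂(μ.prod volume) = d * T := by
    simp_rw [mul_left_comm _ (ρf _)]
    rw [integral_prod_mul (f := ρf) (g := fun v => ‖v‖ ^ 2 * maxwellian d T v), hρone,
      integral_sq_norm_mul_maxwellian hT, one_mul]
  have hD : Integrable (fun p => Real.log (f p) * (maxwellian d T p.2 * ρf p.1 - f p))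
      (μ.prod volume) :=
    (hint2.sub hint1).congr (ae_of_all _ fun p => by simp only [Pi.sub_apply]; ring)
  have hE : Integrable (fun p => (‖p.2‖ ^ 2 * f p - ‖p.2‖ ^ 2 * (ρf p.1 * maxwellian d T p.2))
      / (2 * T)) (μ.prod volume) := (hint3.sub hg2).div_const _
  refine ⟨hE.sub hD, ?_⟩
  rw [integral_sub hE hD, integral_div, integral_sub hint3 hg2,
    henergy, hg2_eq, sub_self, zero_div, zero_sub]

lemma integrable_and_integral_entropy_production (hT : 0 < T) (hfmeas : Measurable f)
    (hfpos : ∀ p, 0 < f p) (hρf : ∀ x, ρf x = ∫ v, f (x, v)) (hf : Integrable f (μ.prod volume))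
    (hG : Integrable (fun p => (‖p.2‖ ^ 2 * f p - ‖p.2‖ ^ 2 * (ρf p.1 * maxwellian d T p.2))
      / (2 * T) - Real.log (f p) * (maxwellian d T p.2 * ρf p.1 - f p)) (μ.prod volume)) :
    Integrable (fun p => (ρf p.1 * maxwellian d T p.2 - f p) *
      (Real.log (ρf p.1 * maxwellian d T p.2) - Real.log (f p))) (μ.prod volume) ∧
    ∫ p, (ρf p.1 * maxwellian d T p.2 - f p) *
      (Real.log (ρf p.1 * maxwellian d T p.2) - Real.log (f p)) ∂(μ.prod volume) =
    ∫ p, ((‖p.2‖ ^ 2 * f p - ‖p.2‖ ^ 2 * (ρf p.1 * maxwellian d T p.2)) / (2 * T)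
      - Real.log (f p) * (maxwellian d T p.2 * ρf p.1 - f p)) ∂(μ.prod volume) := by
  have hρmeas : Measurable ρf := by
    rw [funext hρf]; exact hfmeas.stronglyMeasurable.integral_prod_right'.measurable
  have hmmeas : Measurable (maxwellian d T) := by unfold maxwellian; fun_prop
  refine integrable_prod_and_integral_eq_of_nonneg (by fun_prop) ?_ hG ?_
  · filter_upwards [ae_pos_mul_maxwellian hT hfpos hρf hf] with p hp
    exact sub_mul_log_sub_nonneg hp (hfpos p)
  · filter_upwards [hf.prod_right_ae, hG.prod_right_ae] with x hfx hGx
    exact integral_sub_mul_log_sub_maxwellian hT (fun v => hfpos (x, v)) hfx (hρf x).symm hGx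

end Thermostat

theorem thermostat_entropy_dissipation_general
    {Λ : Type*} [MeasurableSpace Λ] (μ : Measure Λ) [IsFiniteMeasure μ]
    (d : ℕ) (T : ℝ) (hT : 0 < T)
    (f : Λ × EuclideanSpace ℝ (Fin d) → ℝ)
    (hfmeas : Measurable f) (hfpos : ∀ p, 0 < f p)
    (ρf : Λ → ℝ) (hρf : ∀ x, ρf x = ∫ v, f (x, v))
    (hprob : ∫ p, f p ∂(μ.prod volume) = 1)
    (henergy : ∫ p, ‖p.2‖ ^ 2 * f p ∂(μ.prod volume) = (d : ℝ) * T)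
    (hint1 : Integrable (fun p => f p * Real.log (f p)) (μ.prod volume))
    (hint2 : Integrable (fun p => ρf p.1 * maxwellian d T p.2 * Real.log (f p))
      (μ.prod volume))
    (hint3 : Integrable (fun p => ‖p.2‖ ^ 2 * f p) (μ.prod volume)) :
    (∫ p, Real.log (f p) * (maxwellian d T p.2 * ρf p.1 - f p) ∂(μ.prod volume)) ≤ 0 ∧
    ((∫ p, Real.log (f p) * (maxwellian d T p.2 * ρf p.1 - f p) ∂(μ.prod volume)) = 0 ↔
      ∀ᵐ p ∂(μ.prod volume), f p = ρf p.1 * maxwellian d T p.2) := by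
  have hf : Integrable f (μ.prod volume) := .of_integral_ne_zero (by simp [hprob])
  have hρ : ρf = fun x => ∫ v, f (x, v) := funext hρf
  have hρone : ∫ x, ρf x ∂μ = 1 := by rw [hρ, ← integral_prod f hf, hprob]
  obtain ⟨hG, hGD⟩ := integrable_and_integral_energy_sub_dissipation hT
    (hρ ▸ hf.integral_prod_left) hρone henergy hint1 hint2 hint3
  obtain ⟨hΨ, hΨG⟩ := integrable_and_integral_entropy_production hT hfmeas hfpos hρf hf hG
  have hg := ae_pos_mul_maxwellian hT hfpos hρf hf
  have hΨ0 : 0 ≤ᵐ[μ.prod volume] fun p => (ρf p.1 * maxwellian d T p.2 - f p) *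
      (Real.log (ρf p.1 * maxwellian d T p.2) - Real.log (f p)) :=
    hg.mono fun p hp => sub_mul_log_sub_nonneg hp (hfpos p)
  rw [hGD] at hΨG
  refine ⟨by linarith [integral_nonneg_of_ae hΨ0], ?_⟩
  rw [← neg_eq_zero, ← hΨG, integral_eq_zero_iff_of_nonneg_ae hΨ0 hΨ]
  refine ⟨fun h => ?_, fun h => ?_⟩
  · filter_upwards [h, hg] with p hp hgp
    exact ((sub_mul_log_sub_eq_zero_iff hgp (hfpos p)).1 hp).symm
  · filter_upwards [h] with p hp
    simp [hp]

/-- Entropy dissipation of the single-reservoir thermostat: for a positive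
probability density `f` with the correct energy `dT`, the dissipation
`∫∫ log f · (m_T ρ_f - f)` is nonpositive, with equality iff `f = ρ_f m_T` a.e. -/
theorem thermostat_entropy_dissipation
    {Λ : Type*} [MeasurableSpace Λ] (μ : Measure Λ) [IsFiniteMeasure μ]
    (d : ℕ) (hd : 1 ≤ d) (T : ℝ) (hT : 0 < T)
    (f : Λ × EuclideanSpace ℝ (Fin d) → ℝ)
    (hfmeas : Measurable f) (hfpos : ∀ p, 0 < f p)
    (ρf : Λ → ℝ) (hρf : ∀ x, ρf x = ∫ v, f (x, v))
    (hprob : ∫ p, f p ∂(μ.prod volume) = 1)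
    (henergy : ∫ p, ‖p.2‖ ^ 2 * f p ∂(μ.prod volume) = (d : ℝ) * T)
    (hint1 : Integrable (fun p => f p * Real.log (f p)) (μ.prod volume))
    (hint2 : Integrable (fun p => ρf p.1 * maxwellian d T p.2 * Real.log (f p))
      (μ.prod volume))
    (hint3 : Integrable (fun p => ‖p.2‖ ^ 2 * f p) (μ.prod volume)) :
    (∫ p, Real.log (f p) * (maxwellian d T p.2 * ρf p.1 - f p) ∂(μ.prod volume)) ≤ 0 ∧
    ((∫ p, Real.log (f p) * (maxwellian d T p.2 * ρf p.1 - f p) ∂(μ.prod volume)) = 0 ↔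
      ∀ᵐ p ∂(μ.prod volume), f p = ρf p.1 * maxwellian d T p.2) :=
  thermostat_entropy_dissipation_general μ d T hT f hfmeas hfpos ρf hρf hprob henergy hint1 hint2
    hint3
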